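/- arXiv:1910.13502 — 3 statements merged into one kernel-verified Lean document; each statement's English description precedes it below -/
import Mathlib

section
/- Let C be a nonempty finite index set and let α : C → ℝ satisfy α_j > 0 for all j ∈ C. Then the minimum of the delay max_{j∈C} ε_j α_j over all task assignments ε (ε_j ≥ 0, Σ_{j∈C} ε_j = 1) exists, is attained, and equals (Σ_{k∈C} 1/α_k)⁻¹. Equivalently, the maximal computation rate 1 / (min over assignments of the delay) equals Σ_{k∈C} 1/α_k. -/
/-!
Writing `S = ∑ k, 1/α k` and `M` for the delay of an assignment `ε`, every `ε j` is at most
`M / α j`, so `1 = ∑ ε j ≤ M S`. Conversely the assignment proportional to the rates,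
`ε j = (1/α j) / S`, makes every product `ε j α j` equal to `1/S`, so the bound is attained.
-/

open Finset

section

variable {ι : Type*} (C : Finset ι) (hC : C.Nonempty) (α : ι → ℝ)

theorem sum_le_sum_inv_mul_sup' (hα : ∀ j ∈ C, 0 < α j) (ε : ι → ℝ) :
    ∑ j ∈ C, ε j ≤ (∑ j ∈ C, (α j)⁻¹) * C.sup' hC (fun j => ε j * α j) := by
  rw [sum_mul]
  refine sum_le_sum fun j hj => ?_
  rw [inv_mul_eq_div, le_div_iff₀ (hα j hj)]
  exact le_sup' (fun j => ε j * α j) hj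

theorem inv_sum_inv_le_sup' (hα : ∀ j ∈ C, 0 < α j) {ε : ι → ℝ} (hε : ∑ j ∈ C, ε j = 1) :
    (∑ j ∈ C, (α j)⁻¹)⁻¹ ≤ C.sup' hC (fun j => ε j * α j) := by
  have hS : 0 < ∑ j ∈ C, (α j)⁻¹ := sum_pos (fun j hj => inv_pos.2 (hα j hj)) hC
  rw [inv_le_iff_one_le_mul₀' hS, ← hε]
  exact sum_le_sum_inv_mul_sup' C hC α hα ε

noncomputable def proportionalAssignment (j : ι) : ℝ :=
  (α j)⁻¹ / ∑ k ∈ C, (α k)⁻¹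

theorem sum_proportionalAssignment (h : ∑ k ∈ C, (α k)⁻¹ ≠ 0) :
    ∑ j ∈ C, proportionalAssignment C α j = 1 := by
  simp only [proportionalAssignment]
  rw [← sum_div, div_self h]

theorem proportionalAssignment_nonneg (hα : ∀ j ∈ C, 0 < α j) :
    ∀ j ∈ C, 0 ≤ proportionalAssignment C α j := fun j hj =>
  div_nonneg (inv_nonneg.2 (hα j hj).le) (sum_nonneg fun k hk => inv_nonneg.2 (hα k hk).le)

theorem sup'_proportionalAssignment_mul (hα : ∀ j ∈ C, α j ≠ 0) :
    C.sup' hC (fun j => proportionalAssignment C α j * α j) = (∑ k ∈ C, (α k)⁻¹)⁻¹ := by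
  calc C.sup' hC (fun j => proportionalAssignment C α j * α j)
      = C.sup' hC (fun _ => (∑ k ∈ C, (α k)⁻¹)⁻¹) :=
        sup'_congr hC rfl fun j hj => by
          rw [proportionalAssignment, div_mul_eq_mul_div, inv_mul_cancel₀ (hα j hj), one_div]
    _ = (∑ k ∈ C, (α k)⁻¹)⁻¹ := sup'_const _ _

end

/-- Proposition 1 for a single cluster: the minimum of the delay
`max_{j ∈ C} ε j * α j` over all task assignments `ε` exists, is attained, and
equals `(∑ k ∈ C, 1/α k)⁻¹`; equivalently the maximal computation rate (the
reciprocal of this minimal delay) equals `∑ k ∈ C, 1/α k`. -/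
theorem prop1_single_cluster {ι : Type*} (C : Finset ι) (hC : C.Nonempty)
    (α : ι → ℝ) (hα : ∀ j ∈ C, 0 < α j) :
    IsLeast {d : ℝ | ∃ ε : ι → ℝ, (∀ j ∈ C, 0 ≤ ε j) ∧ (∑ j ∈ C, ε j = 1) ∧
        d = C.sup' hC (fun j => ε j * α j)}
      ((∑ k ∈ C, (α k)⁻¹)⁻¹) ∧
    ((∑ k ∈ C, (α k)⁻¹)⁻¹)⁻¹ = ∑ k ∈ C, (α k)⁻¹ := by
  have hS : ∑ k ∈ C, (α k)⁻¹ ≠ 0 := (sum_pos (fun k hk => inv_pos.2 (hα k hk)) hC).ne'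
  refine ⟨⟨⟨proportionalAssignment C α, proportionalAssignment_nonneg C α hα,
    sum_proportionalAssignment C α hS,
    (sup'_proportionalAssignment_mul C hC α fun j hj => (hα j hj).ne').symm⟩, ?_⟩, inv_inv _⟩
  rintro d ⟨ε, -, hε, rfl⟩
  exact inv_sum_inv_le_sup' C hC α hα hε
end

section
/- Let C be a nonempty finite index set and let α : C → ℝ satisfy α_j > 0 for all j ∈ C. For every task assignment ε (ε_j ≥ 0, Σ_{j∈C} ε_j = 1) there exists a task assignment ε' such that ε'_j α_j = ε'_k α_k for all j, k ∈ C and max_{j∈C} ε'_j α_j ≤ max_{j∈C} ε_j α_j. -/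
/-!
The assignment proportional to `1 / α j` makes every product `ε' j * α j` equal to
`(∑ k, (α k)⁻¹)⁻¹`. Conversely, if every `ε j * α j` is at most `M`, then
`1 = ∑ ε j ≤ M * ∑ (α j)⁻¹`, so this common value is at most the delay of any assignment.
-/

open Finset

namespace TaskAssignment

variable {ι : Type*} (C : Finset ι) (α : ι → ℝ)

noncomputable def equalizing (j : ι) : ℝ := (α j)⁻¹ / ∑ k ∈ C, (α k)⁻¹

variable {C α}

theorem sum_inv_pos (hC : C.Nonempty) (hα : ∀ j ∈ C, 0 < α j) : 0 < ∑ k ∈ C, (α k)⁻¹ :=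
  sum_pos (fun j hj => inv_pos.mpr (hα j hj)) hC

theorem equalizing_nonneg (hα : ∀ j ∈ C, 0 < α j) {j : ι} (hj : j ∈ C) :
    0 ≤ equalizing C α j :=
  div_nonneg (inv_nonneg.mpr (hα j hj).le) (sum_nonneg fun k hk => inv_nonneg.mpr (hα k hk).le)

theorem sum_equalizing (hC : C.Nonempty) (hα : ∀ j ∈ C, 0 < α j) :
    ∑ j ∈ C, equalizing C α j = 1 := by
  simp only [equalizing]
  rw [← sum_div, div_self (sum_inv_pos hC hα).ne']

theorem equalizing_mul (hα : ∀ j ∈ C, 0 < α j) {j : ι} (hj : j ∈ C) :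
    equalizing C α j * α j = (∑ k ∈ C, (α k)⁻¹)⁻¹ := by
  rw [equalizing, div_mul_eq_mul_div, inv_mul_cancel₀ (hα j hj).ne', one_div]

theorem sum_le_mul_sum_inv (ε : ι → ℝ) (hα : ∀ j ∈ C, 0 < α j) {M : ℝ}
    (hM : ∀ j ∈ C, ε j * α j ≤ M) : ∑ j ∈ C, ε j ≤ M * ∑ j ∈ C, (α j)⁻¹ := by
  rw [mul_sum]
  exact sum_le_sum fun j hj => by
    rw [← div_eq_mul_inv, le_div_iff₀ (hα j hj)]
    exact hM j hj

end TaskAssignment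

open TaskAssignment in
theorem prop1_exchange_general {ι : Type*} (C : Finset ι) (hC : C.Nonempty)
    (α : ι → ℝ) (hα : ∀ j ∈ C, 0 < α j)
    (ε : ι → ℝ) (hε1 : ∑ j ∈ C, ε j = 1) :
    ∃ ε' : ι → ℝ, (∀ j ∈ C, 0 ≤ ε' j) ∧ (∑ j ∈ C, ε' j = 1) ∧
      (∀ j ∈ C, ∀ k ∈ C, ε' j * α j = ε' k * α k) ∧
      C.sup' hC (fun j => ε' j * α j) ≤ C.sup' hC (fun j => ε j * α j) := by
  refine ⟨equalizing C α, fun j hj => equalizing_nonneg hα hj, sum_equalizing hC hα,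
    fun j hj k hk => by rw [equalizing_mul hα hj, equalizing_mul hα hk], ?_⟩
  set M := C.sup' hC (fun j => ε j * α j)
  have hS := sum_inv_pos hC hα
  have h_one_le : 1 ≤ M * ∑ k ∈ C, (α k)⁻¹ :=
    hε1 ▸ sum_le_mul_sum_inv ε hα fun j hj => le_sup' (fun j => ε j * α j) hj
  refine sup'_le hC _ fun j hj => ?_
  rw [equalizing_mul hα hj, inv_le_iff_one_le_mul₀ hS]
  exact h_one_le

/-- Exchange-argument step in the proof of Proposition 1: for every task assignment
`ε` there exists a task assignment `ε'` that equalizes all products `ε' j * α j`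
(over `j ∈ C`) and whose delay is no larger than that of `ε`. -/
theorem prop1_exchange {ι : Type*} (C : Finset ι) (hC : C.Nonempty)
    (α : ι → ℝ) (hα : ∀ j ∈ C, 0 < α j)
    (ε : ι → ℝ) (hε0 : ∀ j ∈ C, 0 ≤ ε j) (hε1 : ∑ j ∈ C, ε j = 1) :
    ∃ ε' : ι → ℝ, (∀ j ∈ C, 0 ≤ ε' j) ∧ (∑ j ∈ C, ε' j = 1) ∧
      (∀ j ∈ C, ∀ k ∈ C, ε' j * α j = ε' k * α k) ∧
      C.sup' hC (fun j => ε' j * α j) ≤ C.sup' hC (fun j => ε j * α j) :=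
  prop1_exchange_general C hC α hα ε hε1
end

section
/- Let M be a nonempty finite set of masters, for each i ∈ M let C_i be a nonempty finite index set, and let α_{ij} > 0 for all i ∈ M, j ∈ C_i. Then the minimum over all families of task assignments ((ε_{ij})_{j∈C_i})_{i∈M} (each satisfying ε_{ij} ≥ 0 and Σ_{j∈C_i} ε_{ij} = 1) of the overall delay max_{i∈M} max_{j∈C_i} ε_{ij} α_{ij} equals max_{i∈M} (Σ_{j∈C_i} 1/α_{ij})⁻¹. Equivalently, the maximal overall computation rate equals R' = min_{i∈M} Σ_{j∈C_i} 1/α_{ij}. -/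
/-!
Within one cluster, if every node has delay `ε j * α j ≤ m` then `ε j ≤ m / α j`, and summing over
the cluster gives `1 ≤ m * ∑ j, 1 / α j`; the bound is attained by the assignment proportional to
`1 / α j`, which gives every node the same delay. The clusters share no variables, so the optimal
worst delay over all clusters is the worst of the per-cluster optima.
-/

namespace Finset

variable {ι : Type*}

theorem sup'_attach {α : Type*} [SemilatticeSup α] (s : Finset ι) (hs : s.Nonempty) (f : ι → α)
    (h : s.attach.Nonempty) : s.attach.sup' h (fun i => f i) = s.sup' hs f :=
  le_antisymm (sup'_le _ _ fun i _ => le_sup' f i.2)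
    (sup'_le _ _ fun i hi => le_sup'_of_le (fun i : s => f i) (mem_attach s ⟨i, hi⟩) le_rfl)

theorem inv_sup'_inv {s : Finset ι} (hs : s.Nonempty) {f : ι → ℝ} (hf : ∀ i ∈ s, 0 < f i) :
    (s.sup' hs fun i => (f i)⁻¹)⁻¹ = s.inf' hs f := by
  obtain ⟨i₀, hi₀, hmin⟩ := exists_mem_eq_inf' hs f
  have hsup : (s.sup' hs fun i => (f i)⁻¹) = (f i₀)⁻¹ :=
    le_antisymm
      (sup'_le _ _ fun i hi => inv_anti₀ (hf i₀ hi₀) (hmin ▸ inf'_le f hi))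
      (le_sup' (fun i => (f i)⁻¹) hi₀)
  rw [hsup, inv_inv, hmin]

end Finset

open Finset

section SingleCluster

variable {κ : Type*} {s : Finset κ} {a ε : κ → ℝ}

theorem inv_sum_inv_le_sup'_mul (hs : s.Nonempty) (ha : ∀ j ∈ s, 0 < a j)
    (hε : ∑ j ∈ s, ε j = 1) : (∑ j ∈ s, (a j)⁻¹)⁻¹ ≤ s.sup' hs fun j => ε j * a j := by
  set m := s.sup' hs fun j => ε j * a j
  have hle : ∀ j ∈ s, ε j ≤ m * (a j)⁻¹ := fun j hj => by
    rw [← div_eq_mul_inv, le_div_iff₀ (ha j hj)]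
    exact le_sup' (fun j => ε j * a j) hj
  have hone : 1 ≤ m * ∑ j ∈ s, (a j)⁻¹ := by
    rw [mul_sum, ← hε]
    exact sum_le_sum hle
  exact (inv_le_iff_one_le_mul₀' (sum_pos (fun j hj => inv_pos.2 (ha j hj)) hs)).2
    (by rwa [mul_comm])

noncomputable def balancedAssignment (s : Finset κ) (a : κ → ℝ) (j : κ) : ℝ :=
  (a j)⁻¹ / ∑ k ∈ s, (a k)⁻¹

theorem balancedAssignment_nonneg (ha : ∀ k ∈ s, 0 ≤ a k) {j : κ} (hj : j ∈ s) :
    0 ≤ balancedAssignment s a j :=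
  div_nonneg (inv_nonneg.2 (ha j hj)) (sum_nonneg fun k hk => inv_nonneg.2 (ha k hk))

theorem sum_balancedAssignment (h : ∑ k ∈ s, (a k)⁻¹ ≠ 0) :
    ∑ j ∈ s, balancedAssignment s a j = 1 := by
  simp only [balancedAssignment, ← sum_div, div_self h]

theorem balancedAssignment_mul {j : κ} (hj : a j ≠ 0) :
    balancedAssignment s a j * a j = (∑ k ∈ s, (a k)⁻¹)⁻¹ := by
  rw [balancedAssignment, div_eq_inv_mul, mul_assoc, inv_mul_cancel₀ hj, mul_one]

end SingleCluster

/-- Formula (10) of Proposition 1 (multi-cluster version): the minimum over all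
families of per-cluster task assignments of the overall delay
`max_{i ∈ M} max_{j ∈ C i} ε i j * α i j` exists, is attained, and equals
`max_{i ∈ M} (∑ j ∈ C i, 1/α i j)⁻¹`; equivalently, the maximal overall
computation rate (its reciprocal) equals `R' = min_{i ∈ M} ∑ j ∈ C i, 1/α i j`. -/
theorem prop1_multicluster {ι κ : Type*} (M : Finset ι) (hM : M.Nonempty)
    (C : ι → Finset κ) (hC : ∀ i ∈ M, (C i).Nonempty)
    (α : ι → κ → ℝ) (hα : ∀ i ∈ M, ∀ j ∈ C i, 0 < α i j) :
    IsLeast {d : ℝ | ∃ ε : ι → κ → ℝ,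
        (∀ i ∈ M, ∀ j ∈ C i, 0 ≤ ε i j) ∧ (∀ i ∈ M, ∑ j ∈ C i, ε i j = 1) ∧
        d = M.attach.sup' (Finset.attach_nonempty_iff.mpr hM)
          (fun i => (C i.1).sup' (hC i.1 i.2) (fun j => ε i.1 j * α i.1 j))}
      (M.sup' hM (fun i => (∑ j ∈ C i, (α i j)⁻¹)⁻¹)) ∧
    (M.sup' hM (fun i => (∑ j ∈ C i, (α i j)⁻¹)⁻¹))⁻¹ =
      M.inf' hM (fun i => ∑ j ∈ C i, (α i j)⁻¹) := by
  have hS : ∀ i ∈ M, 0 < ∑ j ∈ C i, (α i j)⁻¹ := fun i hi =>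
    sum_pos (fun j hj => inv_pos.2 (hα i hi j hj)) (hC i hi)
  refine ⟨⟨⟨fun i => balancedAssignment (C i) (α i),
      fun i hi j hj => balancedAssignment_nonneg (fun k hk => (hα i hi k hk).le) hj,
      fun i hi => sum_balancedAssignment (hS i hi).ne', ?_⟩, ?_⟩, inv_sup'_inv hM hS⟩
  · rw [← sup'_attach M hM _ (attach_nonempty_iff.mpr hM)]
    refine sup'_congr _ rfl fun i _ => ?_
    rw [sup'_congr _ rfl fun j hj => balancedAssignment_mul (hα i.1 i.2 j hj).ne', sup'_const]
  · rintro d ⟨ε, -, hsum, rfl⟩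
    rw [← sup'_attach M hM _ (attach_nonempty_iff.mpr hM)]
    exact sup'_mono_fun fun i _ => inv_sum_inv_le_sup'_mul _ (hα i.1 i.2) (hsum i.1 i.2)
end
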